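/- arXiv:1912.12415 — 2 statements merged into one kernel-verified Lean document; each statement's English description precedes it below -/
import Mathlib

section
/- Let G be a group and let α and β be tensor commuting automorphisms of G. Then for every integer n ≥ 0, the automorphisms (α ∘ β)ⁿ ∘ α and β ∘ (α ∘ β)ⁿ are tensor commuting automorphisms of G. -/
/-!
Non-abelian tensor square `G ⊗ G`, constructed as the presented group on
symbols `g ⊗ h` with the defining relations
`g*g' ⊗ h = (g^{g'} ⊗ h^{g'}) * (g' ⊗ h)` and
`g ⊗ h*h' = (g ⊗ h') * (g^{h'} ⊗ h^{h'})`, where `a ^ b = b⁻¹ * a * b`.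
-/

variable {G : Type*} [Group G]

/-- Defining relations of the non-abelian tensor square `G ⊗ G`. -/
def tensorRels (G : Type*) [Group G] : Set (FreeGroup (G × G)) :=
  {r | (∃ g g' h : G,
      r = FreeGroup.of (g * g', h) *
        (FreeGroup.of (g'⁻¹ * g * g', g'⁻¹ * h * g') * FreeGroup.of (g', h))⁻¹) ∨
    (∃ g h h' : G,
      r = FreeGroup.of (g, h * h') *
        (FreeGroup.of (g, h') * FreeGroup.of (h'⁻¹ * g * h', h'⁻¹ * h * h'))⁻¹)}

/-- The non-abelian tensor square `G ⊗ G`. -/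
abbrev TensorSquare (G : Type*) [Group G] := PresentedGroup (tensorRels G)

/-- The tensor `g ⊗ h` as an element of `G ⊗ G`. -/
def tmul (g h : G) : TensorSquare G := PresentedGroup.of (g, h)

theorem tensorRels_eq_one {r : FreeGroup (G × G)} (hr : r ∈ tensorRels G) :
    PresentedGroup.mk (tensorRels G) r = 1 :=
  (QuotientGroup.eq_one_iff r).mpr (Subgroup.subset_normalClosure hr)

/-- The first defining relation of `G ⊗ G`. -/
theorem tmul_rel₁ (g g' h : G) :
    tmul (g * g') h = tmul (g'⁻¹ * g * g') (g'⁻¹ * h * g') * tmul g' h := by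
  have h1 := tensorRels_eq_one (G := G) (Or.inl ⟨g, g', h, rfl⟩)
  rw [map_mul, map_inv, map_mul, mul_inv_eq_one] at h1
  exact h1

/-- The second defining relation of `G ⊗ G`. -/
theorem tmul_rel₂ (g h h' : G) :
    tmul g (h * h') = tmul g h' * tmul (h'⁻¹ * g * h') (h'⁻¹ * h * h') := by
  have h1 := tensorRels_eq_one (G := G) (Or.inr ⟨g, h, h', rfl⟩)
  rw [map_mul, map_inv, map_mul, mul_inv_eq_one] at h1
  exact h1

/-- The action of `x : G` on `G ⊗ G`, determined by `(g ⊗ h) ^ x = (x⁻¹*g*x) ⊗ (x⁻¹*h*x)`. -/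
def tensorAct (x : G) : TensorSquare G →* TensorSquare G :=
  PresentedGroup.toGroup
    (f := fun p : G × G => tmul (x⁻¹ * p.1 * x) (x⁻¹ * p.2 * x))
    (by
      rintro r (⟨g, g', h, rfl⟩ | ⟨g, h, h', rfl⟩) <;>
        simp only [map_mul, map_inv, FreeGroup.lift_apply_of, mul_inv_eq_one]
      · have := tmul_rel₁ (x⁻¹ * g * x) (x⁻¹ * g' * x) (x⁻¹ * h * x)
        convert this using 2 <;> group
      · have := tmul_rel₂ (x⁻¹ * g * x) (x⁻¹ * h * x) (x⁻¹ * h' * x)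
        convert this using 2 <;> group)

@[simp] theorem tensorAct_tmul (x g h : G) :
    tensorAct x (tmul g h) = tmul (x⁻¹ * g * x) (x⁻¹ * h * x) :=
  PresentedGroup.toGroup.of _

/-- An automorphism `α` of `G` is tensor commuting if `g ⊗ α g = 1` for all `g`. -/
def IsTensorCommuting (α : G ≃* G) : Prop := ∀ g : G, tmul g (α g) = 1

/-- An automorphism `α` of `G` is tensor central if `[x, α] = x⁻¹ * α x` lies in the
tensor center of `G`, i.e. `(x⁻¹ * α x) ⊗ y = 1` for all `x y`. -/
def IsTensorCentral (α : G ≃* G) : Prop := ∀ x y : G, tmul (x⁻¹ * α x) y = 1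

/-- The inner automorphism `T_g : x ↦ x ^ g = g⁻¹ * x * g` of `G` induced by `g`. -/
def innerAut (g : G) : G ≃* G := MulAut.conj g⁻¹

/-!
Expanding `g * h ⊗ α (g * h) = 1` with both defining relations and `g ⊗ α g = 1` gives
`(g ⊗ α h) ^ h * (h ⊗ α g) ^ (α h) = 1`, so `g ⊗ α h = 1` iff `h ⊗ α g = 1` whenever `α` is
tensor commuting. For a second tensor commuting `φ`, the element `h = φ (α g)` satisfies
`h ⊗ α g = 1` (the relation `x ⊗ y = 1` is symmetric,
as `x ⊗ y ↦ (y ⊗ x)⁻¹` is an endomorphism of `G ⊗ G`), hence `g ⊗ α (φ (α g)) = 1`: the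
automorphism `α * φ * α` is tensor commuting. The theorem follows by induction on `n`, since
`(α * β) ^ (n + 1) * α = α * (β * (α * β) ^ n) * α` and
`β * (α * β) ^ (n + 1) = β * ((α * β) ^ n * α) * β`.
-/

def tensorSwap : TensorSquare G →* TensorSquare G :=
  PresentedGroup.toGroup (f := fun p : G × G => (tmul p.2 p.1)⁻¹)
    (by
      rintro r (⟨g, g', h, rfl⟩ | ⟨g, h, h', rfl⟩) <;>
        simp only [map_mul, map_inv, FreeGroup.lift_apply_of, mul_inv_rev, inv_inv]
      · rw [tmul_rel₂ h g g']; group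
      · rw [tmul_rel₁ h h' g]; group)

@[simp] theorem tensorSwap_tmul (g h : G) : tensorSwap (tmul g h) = (tmul h g)⁻¹ :=
  PresentedGroup.toGroup.of _

theorem tmul_eq_one_comm {g h : G} : tmul g h = 1 ↔ tmul h g = 1 := by
  suffices ∀ a b : G, tmul a b = 1 → tmul b a = 1 from ⟨this g h, this h g⟩
  intro a b hab
  simpa using congrArg tensorSwap hab

theorem tensorAct_inv_tensorAct (x : G) (t : TensorSquare G) :
    tensorAct x⁻¹ (tensorAct x t) = t := by
  have : (tensorAct x⁻¹).comp (tensorAct x) = MonoidHom.id (TensorSquare G) := by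
    ext ⟨g, h⟩
    show tensorAct x⁻¹ (tensorAct x (tmul g h)) = tmul g h
    simp [mul_assoc]
  exact DFunLike.congr_fun this t

theorem tensorAct_eq_one_iff {x : G} {t : TensorSquare G} : tensorAct x t = 1 ↔ t = 1 := by
  constructor
  · intro h
    simpa [h] using (tensorAct_inv_tensorAct x t).symm
  · rintro rfl
    exact map_one _

namespace IsTensorCommuting

variable {α φ : G ≃* G}

theorem tensorAct_mul_tensorAct_eq_one (hα : IsTensorCommuting α) (g h : G) :
    tensorAct h (tmul g (α h)) * tensorAct (α h) (tmul h (α g)) = 1 := by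
  have expand_right : tmul (g * h) (α g * α h)
      = tmul (g * h) (α h) * tensorAct (α h) (tmul (g * h) (α g)) := by
    rw [tensorAct_tmul]; exact tmul_rel₂ _ _ _
  have expand_left_h : tmul (g * h) (α h) = tensorAct h (tmul g (α h)) := by
    rw [tmul_rel₁, hα h, mul_one, tensorAct_tmul]
  have expand_left_g : tmul (g * h) (α g) = tmul h (α g) := by
    rw [tmul_rel₁, ← tensorAct_tmul, hα g, map_one, one_mul]
  rw [← expand_left_h, ← expand_left_g, ← expand_right, ← map_mul]
  exact hα (g * h)

theorem tmul_apply_eq_one_comm (hα : IsTensorCommuting α) {g h : G} :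
    tmul g (α h) = 1 ↔ tmul h (α g) = 1 := by
  suffices ∀ a b : G, tmul b (α a) = 1 → tmul a (α b) = 1 from ⟨this h g, this g h⟩
  intro a b hba
  have := hα.tensorAct_mul_tensorAct_eq_one a b
  rwa [hba, map_one, mul_one, tensorAct_eq_one_iff] at this

theorem mul_mul (hα : IsTensorCommuting α) (hφ : IsTensorCommuting φ) :
    IsTensorCommuting (α * φ * α) := fun g =>
  hα.tmul_apply_eq_one_comm.mpr (tmul_eq_one_comm.mp (hφ (α g)))

end IsTensorCommuting

/-- If `α, β` are tensor commuting automorphisms of `G`, then for all `n ≥ 0`,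
`(α ∘ β)ⁿ ∘ α` and `β ∘ (α ∘ β)ⁿ` are tensor commuting automorphisms. -/
theorem stmt_6 (G : Type*) [Group G] (α β : G ≃* G)
    (hα : IsTensorCommuting α) (hβ : IsTensorCommuting β) (n : ℕ) :
    IsTensorCommuting ((α * β) ^ n * α) ∧ IsTensorCommuting (β * (α * β) ^ n) := by
  induction n with
  | zero => simpa using ⟨hα, hβ⟩
  | succ n ih =>
    obtain ⟨hleft, hright⟩ := ih
    have left_eq : (α * β) ^ (n + 1) * α = α * (β * (α * β) ^ n) * α := by
      rw [pow_succ']; group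
    have right_eq : β * (α * β) ^ (n + 1) = β * ((α * β) ^ n * α) * β := by
      rw [pow_succ]; group
    rw [left_eq, right_eq]
    exact ⟨hα.mul_mul hright, hβ.mul_mul hleft⟩
end

section
/- Let G be a group such that x ⊗ x = 1_⊗ for all x ∈ G. If the identity automorphism is the only tensor commuting automorphism of G, then R_2^⊗(G) = Z(G). -/
/-!
Non-abelian tensor square `G ⊗ G`, constructed as the presented group on
symbols `g ⊗ h` with the defining relations
`g*g' ⊗ h = (g^{g'} ⊗ h^{g'}) * (g' ⊗ h)` and
`g ⊗ h*h' = (g ⊗ h') * (g^{h'} ⊗ h^{h'})`, where `a ^ b = b⁻¹ * a * b`.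
-/

variable {G : Type*} [Group G]

/-!
If `g` is a right `2⊗`-Engel element, then for every `x` the commutator `d = [g, x]` satisfies
`d ⊗ x = 1`. Conjugating by `d⁻¹` and using `a⁻¹ ⊗ k = (a ⊗ k^{a⁻¹})⁻¹` gives `d⁻¹ ⊗ x = 1`, and
since `x ⊗ x = 1` forces `a ⊗ b = (b ⊗ a)⁻¹`, also `x ⊗ d⁻¹ = 1`. Expanding
`x ⊗ x d⁻¹ = (x ⊗ d⁻¹)(x^{d⁻¹} ⊗ x^{d⁻¹})` then shows `x ⊗ x^g = 1`, i.e. the inner automorphism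
`T_g` is tensor commuting. Hence `T_g = 1` and `g` is central; the converse is immediate.
-/

theorem tmul_one_left (k : G) : tmul (1 : G) k = 1 := by
  have h := tmul_rel₁ (1 : G) 1 k
  simp only [mul_one, one_mul, inv_one] at h
  exact left_eq_mul.mp h

theorem tmul_inv_left (a k : G) : tmul a⁻¹ k = (tmul a (a * k * a⁻¹))⁻¹ := by
  have h := tmul_rel₁ a a⁻¹ k
  rw [mul_inv_cancel, tmul_one_left, show a⁻¹⁻¹ * a * a⁻¹ = a by group,
    show a⁻¹⁻¹ * k * a⁻¹ = a * k * a⁻¹ by group] at h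
  rw [eq_comm, inv_eq_iff_mul_eq_one, ← h]

theorem tmul_conj_eq_one {a b : G} (y : G) (h : tmul a b = 1) :
    tmul (y⁻¹ * a * y) (y⁻¹ * b * y) = 1 := by
  rw [← tensorAct_tmul, h, map_one]

theorem tmul_inv_left_eq_one {a k : G} (h : tmul a k = 1) : tmul a⁻¹ k = 1 := by
  have h' := tmul_conj_eq_one a⁻¹ h
  rw [show a⁻¹⁻¹ * a * a⁻¹ = a by group, show a⁻¹⁻¹ * k * a⁻¹ = a * k * a⁻¹ by group] at h'
  rw [tmul_inv_left, h', inv_one]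

theorem tmul_mul_tmul_swap (hsq : ∀ x : G, tmul x x = 1) (a b : G) :
    tmul a b * tmul b a = 1 := by
  -- `1 = ba ⊗ ba` with `ba = (b a b⁻¹) b`: expand in the first slot, then each factor in the second.
  have h := tmul_rel₁ (b * a * b⁻¹) b (b * a)
  rw [show b * a * b⁻¹ * b = b * a by group, show b⁻¹ * (b * a * b⁻¹) * b = a by group,
    show b⁻¹ * (b * a) * b = a * b by group, hsq, tmul_rel₂ a a b, tmul_rel₂ b b a,
    hsq, hsq, mul_one, mul_one] at h
  exact h.symm

theorem tmul_comm_eq_one (hsq : ∀ x : G, tmul x x = 1) {a b : G} (h : tmul a b = 1) :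
    tmul b a = 1 := by
  simpa [h] using tmul_mul_tmul_swap hsq a b

theorem tmul_mul_inv_eq_one (hsq : ∀ x : G, tmul x x = 1) {d x : G} (h : tmul d x = 1) :
    tmul x (x * d⁻¹) = 1 := by
  rw [tmul_rel₂, tmul_comm_eq_one hsq (tmul_inv_left_eq_one h), hsq, one_mul]

theorem isTensorCommuting_innerAut (hsq : ∀ x : G, tmul x x = 1) {g : G}
    (hg : ∀ x : G, tmul (g⁻¹ * x⁻¹ * g * x) x = 1) : IsTensorCommuting (innerAut g) := by
  intro x
  have hx : innerAut g x = x * (g⁻¹ * x⁻¹ * g * x)⁻¹ := by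
    simp only [innerAut, MulAut.conj_apply]
    group
  rw [hx]
  exact tmul_mul_inv_eq_one hsq (hg x)

theorem innerAut_eq_one_iff {g : G} : innerAut g = 1 ↔ g ∈ Subgroup.center G := by
  rw [Subgroup.mem_center_iff, MulEquiv.ext_iff]
  refine forall_congr' fun x => ?_
  simp only [innerAut, MulAut.conj_apply, inv_inv, MulAut.one_apply]
  constructor <;> intro h
  · calc x * g = g * (g⁻¹ * x * g) := by group
      _ = g * x := by rw [h]
  · rw [mul_assoc, h]
    group

/-- If `x ⊗ x = 1` for all `x ∈ G` and the identity is the only tensor commuting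
automorphism of `G`, then `R₂⊗(G) = Z(G)`. -/
theorem stmt_10 (G : Type*) [Group G] (hsq : ∀ x : G, tmul x x = 1)
    (h : ∀ α : G ≃* G, IsTensorCommuting α → α = 1) :
    {g : G | ∀ x : G, tmul (g⁻¹ * x⁻¹ * g * x) x = 1} = (Subgroup.center G : Set G) := by
  ext g
  constructor
  · intro hg
    exact innerAut_eq_one_iff.mp (h _ (isTensorCommuting_innerAut hsq hg))
  · intro hg x
    have hcomm : g⁻¹ * x⁻¹ * g * x = 1 := by
      rw [mul_assoc g⁻¹, Subgroup.mem_center_iff.mp hg x⁻¹]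
      group
    rw [hcomm, tmul_one_left]
end
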